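/- arXiv:1711.08479 — 9 statements merged into one kernel-verified Lean document; each statement's English description precedes it below -/
import Mathlib

section
/- The power series z² − x⁴ − y⁴ is an irreducible element of the ring of formal power series ℂ⟦x, y, z⟧ in three variables over the complex numbers. -/
/-!
Give `x` and `y` weight 1 and `z` weight 2, so that `f = z² - x⁴ - y⁴` is weighted homogeneous.
Initial forms are multiplicative, so a factorization of `f` into two non-units yields one,
`f = A * B`, into weighted homogeneous forms without constant term. Taking `∂²/∂z²` at the origin
shows that the coefficients `δ`, `ε` of `z` in `A` and `B` satisfy `δ * ε = 1`; hence `A` and `B`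
have weight 2, so `∂A/∂z = δ` and `∂B/∂z = ε`, and `∂/∂z` of `f = A * B` reads `ε A + δ B = 2 z`.
Eliminating `A` gives `x⁴ + y⁴ = (z - δ B)²`. But `x⁴ + y⁴` is not a square: from `r² = x⁴ + y⁴`
one gets `r ∂r/∂x = 2 x³` and `r ∂r/∂y = 2 y³`, so `y³ ∂r/∂x = x³ ∂r/∂y`, hence `x³ ∣ ∂r/∂x`,
and then `r` divides the unit `2`, while `r` has no constant term.
-/

open Finsupp

namespace MvPowerSeries

variable {σ R : Type*}

section WeightedHomogeneous

variable {w : σ → ℕ}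

section CommSemiring

variable [CommSemiring R]

theorem isWeightedHomogeneous_X_pow (i : σ) (n : ℕ) :
    IsWeightedHomogeneous w (X i ^ n : MvPowerSeries σ R) (n * w i) := by
  classical
  intro d hd
  rw [coeff_X_pow] at hd
  split_ifs at hd with h
  · simp [h, weight_single]
  · exact absurd rfl hd

theorem IsWeightedHomogeneous.pderiv {f : MvPowerSeries σ R} {p : ℕ}
    (hf : IsWeightedHomogeneous w f p) (i : σ) :
    IsWeightedHomogeneous w (MvPowerSeries.pderiv R i f) (p - w i) := by
  intro d hd
  rw [coeff_pderiv] at hd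
  have := hf (left_ne_zero_of_mul hd)
  rw [map_add, weight_single, one_smul] at this
  omega

theorem constantCoeff_pderiv (i : σ) (f : MvPowerSeries σ R) :
    constantCoeff (pderiv R i f) = coeff (single i 1) f := by
  simp [← coeff_zero_eq_constantCoeff_apply, coeff_pderiv]

theorem IsWeightedHomogeneous.eq_C_constantCoeff (hw : ∀ i, w i ≠ 0) {f : MvPowerSeries σ R}
    (hf : IsWeightedHomogeneous w f 0) : f = C (constantCoeff f) := by
  classical
  have := nonTorsionWeight_of ℕ w hw
  ext d
  rw [coeff_C]
  split_ifs with hd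
  · rw [hd, coeff_zero_eq_constantCoeff_apply]
  · exact hf.coeff_eq_zero (mt (weight_eq_zero_iff_eq_zero w).mp hd)

theorem IsWeightedHomogeneous.pderiv_eq_C (hw : ∀ i, w i ≠ 0) {f : MvPowerSeries σ R} {i : σ}
    (hf : IsWeightedHomogeneous w f (w i)) :
    MvPowerSeries.pderiv R i f = C (coeff (single i 1) f) := by
  have h0 : IsWeightedHomogeneous w (MvPowerSeries.pderiv R i f) (w i - w i) := hf.pderiv i
  rw [Nat.sub_self] at h0
  rw [h0.eq_C_constantCoeff hw, constantCoeff_pderiv]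

noncomputable def weightedInitialForm (w : σ → ℕ) (f : MvPowerSeries σ R) : MvPowerSeries σ R :=
  weightedHomogeneousComponent w (f.weightedOrder w).toNat f

theorem isWeightedHomogeneous_weightedInitialForm (f : MvPowerSeries σ R) :
    IsWeightedHomogeneous w (weightedInitialForm w f) (f.weightedOrder w).toNat :=
  isWeightedHomogeneous_weightedHomogeneousComponent w f _

theorem constantCoeff_weightedInitialForm {f : MvPowerSeries σ R} (hf : constantCoeff f = 0) :
    constantCoeff (weightedInitialForm w f) = 0 := by
  rw [← coeff_zero_eq_constantCoeff_apply, weightedInitialForm,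
    coeff_weightedHomogeneousComponent, coeff_zero_eq_constantCoeff_apply, hf, ite_self]

theorem IsWeightedHomogeneous.weightedInitialForm_eq {f : MvPowerSeries σ R} {n : ℕ}
    (hf : IsWeightedHomogeneous w f n) : weightedInitialForm w f = f := by
  by_cases hf0 : f = 0
  · simp [hf0, weightedInitialForm]
  have horder : (f.weightedOrder w).toNat = n := by
    obtain ⟨d, hd, hwd⟩ := f.exists_coeff_ne_zero_and_weightedOrder w
      ((ne_zero_iff_weightedOrder_finite w).mp hf0)
    rw [← hf hd, ← hwd, ENat.toNat_natCast]
  rw [weightedInitialForm, horder,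
    ← isWeightedHomogeneous_iff_eq_weightedHomogeneousComponent.mp hf]

theorem weightedInitialForm_mul [NoZeroDivisors R] (f g : MvPowerSeries σ R) :
    weightedInitialForm w (f * g) = weightedInitialForm w f * weightedInitialForm w g := by
  by_cases hf : f = 0
  · simp [hf, weightedInitialForm]
  by_cases hg : g = 0
  · simp [hg, weightedInitialForm]
  have hf' := (ne_zero_iff_weightedOrder_finite w).mp hf
  have hg' := (ne_zero_iff_weightedOrder_finite w).mp hg
  rw [weightedInitialForm, weightedOrder_mul,
    ENat.toNat_add (hf' ▸ ENat.natCast_ne_top _) (hg' ▸ ENat.natCast_ne_top _),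
    weightedHomogeneousComponent_mul_of_le_weightedOrder hf'.le hg'.le]
  rfl

end CommSemiring

theorem IsWeightedHomogeneous.sub [CommRing R] {f g : MvPowerSeries σ R} {p : ℕ}
    (hf : IsWeightedHomogeneous w f p) (hg : IsWeightedHomogeneous w g p) :
    IsWeightedHomogeneous w (f - g) p := by
  intro d hd
  by_contra hne
  rw [map_sub, hf.coeff_eq_zero hne, hg.coeff_eq_zero hne, sub_zero] at hd
  exact hd rfl

end WeightedHomogeneous

theorem X_pow_dvd_of_dvd_X_pow_mul [CommSemiring R] {i j : σ} (hij : i ≠ j) {m n : ℕ}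
    {f : MvPowerSeries σ R} (h : X i ^ m ∣ X j ^ n * f) : X i ^ m ∣ f := by
  rw [X_pow_dvd_iff] at h ⊢
  intro d hd
  have := h (d + single j n) (by simpa [single_apply, hij.symm] using hd)
  rwa [X_pow_eq, coeff_monomial_mul, if_pos le_add_self, add_tsub_cancel_right, one_mul] at this

section CharZero

variable {K : Type*} [Field K] [CharZero K]

theorem mul_pderiv_eq_of_X_pow_add_X_pow_eq_sq {i j : σ} {n : ℕ} {r : MvPowerSeries σ K}
    (hij : i ≠ j) (h : X i ^ n + X j ^ n = r ^ 2) :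
    r * pderiv K i r = C (n / 2 : K) * X i ^ (n - 1) := by
  have e := congrArg (pderiv K i) h
  simp only [map_add, pderiv_pow, pderiv_X_self, pderiv_X_of_ne hij.symm, mul_zero, add_zero,
    mul_one] at e
  have h2 : C (2⁻¹ : K) * 2 = (1 : MvPowerSeries σ K) := by
    rw [← map_ofNat C, ← map_mul, inv_mul_cancel₀ two_ne_zero, map_one]
  rw [div_eq_mul_inv, map_mul, map_natCast]
  linear_combination -C (2⁻¹ : K) * e - r * pderiv K i r * h2

theorem X_pow_add_X_pow_ne_sq {i j : σ} (hij : i ≠ j) {n : ℕ} (hn : n ≠ 0)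
    (r : MvPowerSeries σ K) : X i ^ n + X j ^ n ≠ r ^ 2 := by
  intro h
  have hX : ∀ k : σ, (X k ^ (n - 1) : MvPowerSeries σ K) ≠ 0 := fun k =>
    pow_ne_zero _ (nonZeroDivisors.ne_zero X_mem_nonzeroDivisors)
  have hi := mul_pderiv_eq_of_X_pow_add_X_pow_eq_sq hij h
  have hj := mul_pderiv_eq_of_X_pow_add_X_pow_eq_sq hij.symm ((add_comm _ _).trans h)
  have hr : r ≠ 0 := by
    rintro rfl
    simp [hn, hX] at hi
  have hsym : X j ^ (n - 1) * pderiv K i r = X i ^ (n - 1) * pderiv K j r := by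
    have : r * (X j ^ (n - 1) * pderiv K i r - X i ^ (n - 1) * pderiv K j r) = 0 := by
      linear_combination X j ^ (n - 1) * hi - X i ^ (n - 1) * hj
    simpa [hr, sub_eq_zero] using this
  obtain ⟨s, hs⟩ := X_pow_dvd_of_dvd_X_pow_mul hij (Dvd.intro _ hsym.symm)
  have hrs : r * s = C (n / 2 : K) := by
    apply mul_left_cancel₀ (hX i)
    rw [hs] at hi
    linear_combination hi
  have hr0 : constantCoeff r = 0 := by
    simpa [hn] using congrArg constantCoeff h.symm
  have hc := congrArg constantCoeff hrs
  rw [map_mul, hr0, zero_mul, constantCoeff_C] at hc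
  exact div_ne_zero (Nat.cast_ne_zero.mpr hn) two_ne_zero hc.symm

theorem coeff_single_mul_coeff_single_eq_one_of_mul_eq {A B : MvPowerSeries (Fin 3) K}
    (hA : constantCoeff A = 0) (hB : constantCoeff B = 0)
    (h : A * B = X 2 ^ 2 - X 0 ^ 4 - X 1 ^ 4) :
    coeff (single 2 1) A * coeff (single 2 1) B = 1 := by
  have e : constantCoeff (pderiv K 2 (pderiv K 2 (A * B))) = 2 := by
    rw [h]
    simp [map_ofNat]
  simp only [Derivation.leibniz, smul_eq_mul, map_add, map_mul, hA, hB, constantCoeff_pderiv,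
    zero_mul, zero_add] at e
  linear_combination e / 2

theorem mul_ne_X_sq_sub_X_pow_four_sub_X_pow_four {A B : MvPowerSeries (Fin 3) K} {p q : ℕ}
    (hA : IsWeightedHomogeneous ![1, 1, 2] A p) (hB : IsWeightedHomogeneous ![1, 1, 2] B q)
    (hA0 : constantCoeff A = 0) (hB0 : constantCoeff B = 0) :
    A * B ≠ X 2 ^ 2 - X 0 ^ 4 - X 1 ^ 4 := by
  intro h
  set δ := coeff (single 2 1) A
  set ε := coeff (single 2 1) B
  have hδε : δ * ε = 1 := coeff_single_mul_coeff_single_eq_one_of_mul_eq hA0 hB0 h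
  have hw : ∀ i, ![1, 1, 2] i ≠ 0 := by decide
  obtain rfl : p = 2 := (hA (left_ne_zero_of_mul_eq_one hδε)).symm.trans (by simp [weight_single])
  obtain rfl : q = 2 := (hB (right_ne_zero_of_mul_eq_one hδε)).symm.trans (by simp [weight_single])
  have hD : pderiv K 2 (A * B) = 2 * X 2 := by
    rw [h]
    simp
  have hDA : pderiv K 2 A = C δ := hA.pderiv_eq_C hw
  have hDB : pderiv K 2 B = C ε := hB.pderiv_eq_C hw
  rw [Derivation.leibniz, hDA, hDB, smul_eq_mul, smul_eq_mul] at hD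
  have hC : C δ * C ε = (1 : MvPowerSeries (Fin 3) K) := by
    rw [← map_mul, hδε, map_one]
  apply X_pow_add_X_pow_ne_sq (i := 0) (j := 1) (by decide) (n := 4) (by norm_num) (X 2 - C δ * B)
  linear_combination h - C δ * B * hD + A * B * hC

end CharZero

end MvPowerSeries

open MvPowerSeries in
/-- The formal power series `z² − x⁴ − y⁴` is an irreducible element of `ℂ⟦x, y, z⟧`,
the ring of formal power series in three variables over `ℂ` (with `x = X 0`, `y = X 1`,
`z = X 2`). -/
theorem irreducible_z_sq_sub_x_pow4_sub_y_pow4 :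
    Irreducible ((X 2 : MvPowerSeries (Fin 3) ℂ) ^ 2 - X 0 ^ 4 - X 1 ^ 4) := by
  have hf : IsWeightedHomogeneous ![1, 1, 2]
      (X 2 ^ 2 - X 0 ^ 4 - X 1 ^ 4 : MvPowerSeries (Fin 3) ℂ) 4 :=
    IsWeightedHomogeneous.sub (IsWeightedHomogeneous.sub (isWeightedHomogeneous_X_pow 2 2)
      (isWeightedHomogeneous_X_pow 0 4)) (isWeightedHomogeneous_X_pow 1 4)
  refine ⟨fun hu => ?_, fun a b hab => ?_⟩
  · simp [isUnit_iff_constantCoeff] at hu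
  · by_contra! hab'
    simp only [isUnit_iff_constantCoeff, isUnit_iff_ne_zero, ne_eq, not_not] at hab'
    apply mul_ne_X_sq_sub_X_pow_four_sub_X_pow_four (isWeightedHomogeneous_weightedInitialForm a)
      (isWeightedHomogeneous_weightedInitialForm b) (constantCoeff_weightedInitialForm hab'.1)
      (constantCoeff_weightedInitialForm hab'.2)
    rw [← weightedInitialForm_mul, ← hab, hf.weightedInitialForm_eq]
end

section
/- Define φ₂ : ℝ³ → ℝ by φ₂(x,y,z) = x³ / (x² + x·y·z^{1/3} + y²·z^{2/3}) whenever x² + x·y·z^{1/3} + y²·z^{2/3} ≠ 0, and φ₂(x,y,z) = 0 otherwise. Then φ₂ is continuous on ℝ³. -/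
/-!
Write `φ₂(x, y, z) = g(x, y · z^{1/3})` with `g(x, u) = x³ / (x² + x u + u²)`. The cube root is
continuous, being a monotone surjection of `ℝ`. The quadratic form `x² + x u + u²` is positive
definite, so `g` is continuous off the origin; at the origin, `x² ≤ 2 (x² + x u + u²)` gives
`|g(x, u)| ≤ 2 |x|`, which forces continuity there as well.
-/

open Filter Topology

theorem Odd.continuous_of_forall_pow_eq {K : Type*} [Field K] [LinearOrder K]
    [IsStrictOrderedRing K] [TopologicalSpace K] [OrderTopology K] {n : ℕ} (hn : Odd n)
    {f : K → K} (hf : ∀ t, f t ^ n = t) : Continuous f := by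
  have hmono : StrictMono f := fun a b hab => by
    rwa [← hn.strictMono_pow.lt_iff_lt, hf, hf]
  exact hmono.monotone.continuous_of_surjective fun t =>
    ⟨t ^ n, hn.strictMono_pow.injective (hf _)⟩

theorem sq_le_two_mul_sq_add_mul_add_sq {R : Type*} [CommRing R] [LinearOrder R]
    [IsStrictOrderedRing R] (x u : R) : x ^ 2 ≤ 2 * (x ^ 2 + x * u + u ^ 2) := by
  nlinarith [sq_nonneg (x + u), sq_nonneg u]

theorem abs_cube_div_sq_add_mul_add_sq_le {K : Type*} [Field K] [LinearOrder K]
    [IsStrictOrderedRing K] (x u : K) : |x ^ 3 / (x ^ 2 + x * u + u ^ 2)| ≤ 2 * |x| := by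
  have hQ : 0 ≤ x ^ 2 + x * u + u ^ 2 := by
    nlinarith [sq_nonneg (x + u), sq_nonneg x, sq_nonneg u]
  rw [abs_div, abs_of_nonneg hQ, pow_succ', abs_mul, abs_pow, sq_abs, mul_div_assoc, mul_comm 2]
  exact mul_le_mul_of_nonneg_left
    (div_le_of_le_mul₀ hQ zero_le_two (sq_le_two_mul_sq_add_mul_add_sq x u)) (abs_nonneg x)

theorem continuous_cube_div_sq_add_mul_add_sq :
    Continuous fun q : ℝ × ℝ => q.1 ^ 3 / (q.1 ^ 2 + q.1 * q.2 + q.2 ^ 2) := by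
  refine continuous_iff_continuousAt.2 fun q => ?_
  by_cases hq : q.1 ^ 2 + q.1 * q.2 + q.2 ^ 2 = 0
  · have hx : q.1 = 0 := by
      have := sq_le_two_mul_sq_add_mul_add_sq q.1 q.2
      rw [hq, mul_zero] at this
      exact pow_eq_zero_iff two_ne_zero |>.1 (le_antisymm this (sq_nonneg _))
    have h2x : Tendsto (fun p : ℝ × ℝ => 2 * |p.1|) (𝓝 q) (𝓝 0) := by
      have : Continuous fun p : ℝ × ℝ => 2 * |p.1| := by fun_prop
      simpa [hx] using this.tendsto q
    simpa [ContinuousAt, hx] using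
      squeeze_zero_norm (fun p => abs_cube_div_sq_add_mul_add_sq_le p.1 p.2) h2x
  · exact ContinuousAt.div (by fun_prop) (by fun_prop) hq

/-- The function `φ₂(x,y,z) = x³ / (x² + x·y·z^{1/3} + y²·z^{2/3})` (extended by `0` where
the denominator vanishes) is continuous on `ℝ³`. Here `cbrt` is the real cube root, i.e.
the unique function with `(cbrt t)³ = t` for all `t`. -/
theorem continuous_phi2 (cbrt : ℝ → ℝ) (hcbrt : ∀ t, cbrt t ^ 3 = t)
    (φ₂ : ℝ × ℝ × ℝ → ℝ)
    (hφ₂ : ∀ p : ℝ × ℝ × ℝ,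
      φ₂ p = if p.1 ^ 2 + p.1 * p.2.1 * cbrt p.2.2 + p.2.1 ^ 2 * (cbrt p.2.2) ^ 2 ≠ 0 then
          p.1 ^ 3 / (p.1 ^ 2 + p.1 * p.2.1 * cbrt p.2.2 + p.2.1 ^ 2 * (cbrt p.2.2) ^ 2)
        else 0) :
    Continuous φ₂ := by
  -- Lean's `x / 0 = 0` already supplies the value `0` on the zero set of the denominator.
  have hφ : φ₂ = (fun q : ℝ × ℝ => q.1 ^ 3 / (q.1 ^ 2 + q.1 * q.2 + q.2 ^ 2)) ∘
      fun p => (p.1, p.2.1 * cbrt p.2.2) := by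
    funext p
    have hden : p.1 ^ 2 + p.1 * (p.2.1 * cbrt p.2.2) + (p.2.1 * cbrt p.2.2) ^ 2 =
        p.1 ^ 2 + p.1 * p.2.1 * cbrt p.2.2 + p.2.1 ^ 2 * cbrt p.2.2 ^ 2 := by ring
    rw [hφ₂, Function.comp_apply, hden]
    split_ifs with h
    · rfl
    · rw [not_not.1 h, div_zero]
  have hcbrt_cont : Continuous cbrt := (by decide : Odd 3).continuous_of_forall_pow_eq hcbrt
  rw [hφ]
  exact continuous_cube_div_sq_add_mul_add_sq.comp (by fun_prop)
end

section
/- Let ψ₁, ψ₂ : ℝ³ → ℝ be continuous functions satisfying x³·y·ψ₁(x,y,z) + (x³ − y³·z)·ψ₂(x,y,z) = x⁴ for all (x,y,z) ∈ ℝ³. Then ψ₁(0,0,c) = c^{1/3} for every real number c. -/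
/-!
Along the curve `t ↦ (t a, t, a³)` the factor `x³ - y³ z` vanishes, so for `a, t ≠ 0` the identity
forces `ψ₁ (t a, t, a³) = a`; letting `t → 0` gives `ψ₁ (0, 0, a³) = a` for `a ≠ 0`, and continuity
in `a` extends this to `a = 0`.
-/

section

variable {ψ₁ ψ₂ : ℝ × ℝ × ℝ → ℝ}
  (heq : ∀ x y z : ℝ, x ^ 3 * y * ψ₁ (x, y, z) + (x ^ 3 - y ^ 3 * z) * ψ₂ (x, y, z) = x ^ 4)
include heq

theorem apply_mul_cube_eq_of_ne_zero {a t : ℝ} (ha : a ≠ 0) (ht : t ≠ 0) :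
    ψ₁ (t * a, t, a ^ 3) = a := by
  have hne : (t * a) ^ 3 * t ≠ 0 := by positivity
  refine mul_left_cancel₀ hne ?_
  linear_combination heq (t * a) t (a ^ 3)

theorem apply_zero_zero_cube (hψ₁ : Continuous ψ₁) (a : ℝ) : ψ₁ (0, 0, a ^ 3) = a := by
  have h_ne : ∀ a : ℝ, a ≠ 0 → ψ₁ (0, 0, a ^ 3) = a := by
    intro a ha
    have hcurve : (fun t : ℝ => ψ₁ (t * a, t, a ^ 3)) = fun _ => a :=
      Continuous.ext_on (dense_compl_singleton 0) (by fun_prop) continuous_const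
        fun t ht => apply_mul_cube_eq_of_ne_zero heq ha ht
    simpa using congrFun hcurve 0
  have hall : (fun a : ℝ => ψ₁ (0, 0, a ^ 3)) = id :=
    Continuous.ext_on (dense_compl_singleton 0) (by fun_prop) continuous_id h_ne
  exact congrFun hall a

end

theorem continuous_solution_forces_cbrt_general (cbrt : ℝ → ℝ) (hcbrt : ∀ t, cbrt t ^ 3 = t)
    (ψ₁ ψ₂ : ℝ × ℝ × ℝ → ℝ) (hψ₁ : Continuous ψ₁)
    (heq : ∀ x y z : ℝ,
      x ^ 3 * y * ψ₁ (x, y, z) + (x ^ 3 - y ^ 3 * z) * ψ₂ (x, y, z) = x ^ 4) :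
    ∀ c : ℝ, ψ₁ (0, 0, c) = cbrt c := by
  intro c
  simpa [hcbrt] using apply_zero_zero_cube heq hψ₁ (cbrt c)

/-- If `ψ₁, ψ₂ : ℝ³ → ℝ` are continuous and satisfy
`x³·y·ψ₁(x,y,z) + (x³ − y³·z)·ψ₂(x,y,z) = x⁴` everywhere, then `ψ₁(0,0,c) = c^{1/3}` for
every real `c`. Here `cbrt` is the real cube root, i.e. the unique function with
`(cbrt t)³ = t` for all `t`. -/
theorem continuous_solution_forces_cbrt (cbrt : ℝ → ℝ) (hcbrt : ∀ t, cbrt t ^ 3 = t)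
    (ψ₁ ψ₂ : ℝ × ℝ × ℝ → ℝ) (hψ₁ : Continuous ψ₁) (hψ₂ : Continuous ψ₂)
    (heq : ∀ x y z : ℝ,
      x ^ 3 * y * ψ₁ (x, y, z) + (x ^ 3 - y ^ 3 * z) * ψ₂ (x, y, z) = x ^ 4) :
    ∀ c : ℝ, ψ₁ (0, 0, c) = cbrt c :=
  continuous_solution_forces_cbrt_general cbrt hcbrt ψ₁ ψ₂ hψ₁ heq
end

section
/- There do not exist arc-analytic functions ψ₁, ψ₂ : ℝ³ → ℝ satisfying x³·y·ψ₁(x,y,z) + (x³ − y³·z)·ψ₂(x,y,z) = x⁴ for all (x,y,z) ∈ ℝ³. -/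
/-! Along the analytic arc `s ↦ (s u, s, u³)` the coefficient `x³ - y³ z` vanishes identically,
so the equation forces `ψ₁ = u` on the arc for `s ≠ 0`, and continuity of `ψ₁` along it gives
`ψ₁ (0, 0, u³) = u`. Thus `t ↦ ψ₁ (0, 0, t)` is the cube root, which is not differentiable at `0`,
although it is analytic by arc-analyticity of `ψ₁` along the `z`-axis. -/

/-- A function is *arc-analytic* if it is real-analytic along every real-analytic arc
defined on `(-1, 1)`. -/
def ArcAnalytic {E : Type*} [NormedAddCommGroup E] [NormedSpace ℝ E] (f : E → ℝ) : Prop :=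
  ∀ γ : ℝ → E, AnalyticOnNhd ℝ γ (Set.Ioo (-1) 1) →
    AnalyticOnNhd ℝ (f ∘ γ) (Set.Ioo (-1) 1)

open Topology

theorem ContinuousAt.eq_of_forall_ne {X Y : Type*} [TopologicalSpace X] [TopologicalSpace Y]
    [T2Space Y] {f g : X → Y} {x : X} [(𝓝[≠] x).NeBot] (hf : ContinuousAt f x)
    (hg : ContinuousAt g x) (h : ∀ y ≠ x, f y = g y) : f x = g x :=
  ((hf.eventuallyEq_nhds_iff_eventuallyEq_nhdsNE hg).1
    (eventually_nhdsWithin_of_forall h)).eq_of_nhds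

theorem not_differentiableAt_of_leftInverse_of_hasDerivAt_zero {𝕜 : Type*}
    [NontriviallyNormedField 𝕜] {g h : 𝕜 → 𝕜} {a : 𝕜} (hh : HasDerivAt h 0 a)
    (hgh : Function.LeftInverse g h) : ¬ DifferentiableAt 𝕜 g (h a) := by
  intro hg
  have hcomp : HasDerivAt (g ∘ h) (deriv g (h a) * 0) a := hg.hasDerivAt.comp a hh
  rw [hgh.comp_eq_id, mul_zero] at hcomp
  exact one_ne_zero ((hasDerivAt_id a).unique hcomp)

section
variable {ψ₁ ψ₂ : ℝ × ℝ × ℝ → ℝ}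
  (heq : ∀ x y z : ℝ, x ^ 3 * y * ψ₁ (x, y, z) + (x ^ 3 - y ^ 3 * z) * ψ₂ (x, y, z) = x ^ 4)
include heq

theorem apply_mul_eq_of_ne_zero {s u : ℝ} (hs : s ≠ 0) (hu : u ≠ 0) :
    ψ₁ (s * u, s, u ^ 3) = u := by
  have hne : s ^ 4 * u ^ 3 ≠ 0 := by positivity
  refine mul_left_cancel₀ hne ?_
  linear_combination heq (s * u) s (u ^ 3)

theorem apply_zero_zero_pow_three_of_ne_zero (hψ₁ : ArcAnalytic ψ₁) {u : ℝ} (hu : u ≠ 0) :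
    ψ₁ (0, 0, u ^ 3) = u := by
  have hcont : ContinuousAt (fun s : ℝ => ψ₁ (s * u, s, u ^ 3)) 0 :=
    (hψ₁ _ (fun _ _ => by fun_prop) 0 (by norm_num)).continuousAt
  simpa using hcont.eq_of_forall_ne continuousAt_const
    fun s hs => apply_mul_eq_of_ne_zero heq hs hu

theorem apply_zero_zero_pow_three (hψ₁ : ArcAnalytic ψ₁) (u : ℝ) :
    ψ₁ (0, 0, u ^ 3) = u := by
  rcases ne_or_eq u 0 with hu | rfl
  · exact apply_zero_zero_pow_three_of_ne_zero heq hψ₁ hu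
  have hcont : ContinuousAt (fun s : ℝ => ψ₁ (0, 0, s ^ 3)) 0 :=
    (hψ₁ _ (fun _ _ => by fun_prop) 0 (by norm_num)).continuousAt
  exact hcont.eq_of_forall_ne continuousAt_id
    fun s hs => apply_zero_zero_pow_three_of_ne_zero heq hψ₁ hs
end

/-- There do not exist arc-analytic functions `ψ₁, ψ₂ : ℝ³ → ℝ` satisfying
`x³·y·ψ₁(x,y,z) + (x³ − y³·z)·ψ₂(x,y,z) = x⁴` for all `(x,y,z) ∈ ℝ³`. -/
theorem no_arcAnalytic_solution :
    ¬ ∃ ψ₁ ψ₂ : ℝ × ℝ × ℝ → ℝ, ArcAnalytic ψ₁ ∧ ArcAnalytic ψ₂ ∧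
      ∀ x y z : ℝ,
        x ^ 3 * y * ψ₁ (x, y, z) + (x ^ 3 - y ^ 3 * z) * ψ₂ (x, y, z) = x ^ 4 := by
  rintro ⟨ψ₁, ψ₂, hψ₁, -, heq⟩
  have hcube : HasDerivAt (fun u : ℝ => u ^ 3) 0 0 := by
    simpa using hasDerivAt_pow 3 (0 : ℝ)
  have hdiff : DifferentiableAt ℝ (fun t => ψ₁ (0, 0, t)) ((0 : ℝ) ^ 3) := by
    simpa [Function.comp_def] using
      (hψ₁ (fun t => (0, 0, t)) (fun _ _ => by fun_prop) 0 (by norm_num)).differentiableAt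
  exact not_differentiableAt_of_leftInverse_of_hasDerivAt_zero (g := fun t => ψ₁ (0, 0, t))
    hcube (apply_zero_zero_pow_three heq hψ₁) hdiff
end

section
/- There do not exist Nash regulous functions ψ₁, ψ₂ : ℝ³ → ℝ satisfying x³·y·ψ₁(x,y,z) + (x³ − y³·z)·ψ₂(x,y,z) = x⁴ for all (x,y,z) ∈ ℝ³. -/
/-- A set `S ⊆ ℝⁿ` is *semialgebraic* if it is a finite union of sets of the form
`{x : p x = 0, q₁ x > 0, …, q_r x > 0}` for real polynomials `p, q₁, …, q_r`. -/
def IsSemialgebraic {n : ℕ} (S : Set (Fin n → ℝ)) : Prop :=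
  ∃ (k : ℕ) (p : Fin k → MvPolynomial (Fin n) ℝ) (r : Fin k → ℕ)
    (q : (i : Fin k) → Fin (r i) → MvPolynomial (Fin n) ℝ),
    S = ⋃ i, {x | MvPolynomial.eval x (p i) = 0 ∧
        ∀ j, 0 < MvPolynomial.eval x (q i j)}

/-- A *Nash function* on `ℝⁿ` is a real-analytic function `ℝⁿ → ℝ` whose graph is a
semialgebraic subset of `ℝⁿ⁺¹`. -/
def IsNashFunction {n : ℕ} (f : (Fin n → ℝ) → ℝ) : Prop :=
  AnalyticOnNhd ℝ f Set.univ ∧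
    IsSemialgebraic {v : Fin (n + 1) → ℝ | v (Fin.last n) = f (Fin.init v)}

/-- A continuous `f : ℝⁿ → ℝ` is *Nash regulous* if there are Nash functions `g, h` with
the zero set of `h` nowhere dense and `f = g / h` off the zero set of `h`. -/
def IsNashRegulous {n : ℕ} (f : (Fin n → ℝ) → ℝ) : Prop :=
  Continuous f ∧ ∃ g h : (Fin n → ℝ) → ℝ, IsNashFunction g ∧ IsNashFunction h ∧
    IsNowhereDense {x | h x = 0} ∧ ∀ x, h x ≠ 0 → f x = g x / h x


/-! On the surface `x³ = y³ z`, parametrized by `(s, y) ↦ (s y, y, s³)`, the identity forces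
`ψ₁ = s`, so by continuity `ψ₁ (0, 0, z)` is the real cube root of `z`. Write `ψ₁ = g / h`
with `g, h` Nash and restrict to a plane through the `z`-axis, with coordinates `(t, z)`, on
which `h` does not vanish identically. If `t ^ b` is the lowest power of `t` in the expansion
of `h`, comparing the coefficients of `t ^ b` in `ψ₁ h = g` gives `A z = ∛z · B z` with `A, B`
analytic and `B ≠ 0`. Then `A³ = z B³`, which is impossible: at `0` the left side vanishes to
an order divisible by `3`, the right side does not. -/

open Filter Set Topology Nat

theorem surjective_pow_of_odd {n : ℕ} (hn : Odd n) :
    Function.Surjective (fun s : ℝ => s ^ n) := by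
  refine (continuous_pow n).surjective (tendsto_pow_atTop hn.pos.ne') ?_
  convert tendsto_neg_atTop_atBot.comp
    ((tendsto_pow_atTop (α := ℝ) hn.pos.ne').comp tendsto_neg_atBot_atTop) using 2 with s
  simp [hn.neg_pow]

section OneVariable

variable {𝕜 : Type*} [NontriviallyNormedField 𝕜]

theorem analyticOrderAt_eq_top_of_pow_three_eq {A B : 𝕜 → 𝕜} (hA : AnalyticAt 𝕜 A 0)
    (hB : AnalyticAt 𝕜 B 0) (h : ∀ z, A z ^ 3 = z * B z ^ 3) : analyticOrderAt B 0 = ⊤ := by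
  have hord : analyticOrderAt (A ^ 3) 0 = analyticOrderAt (id * B ^ 3) 0 := by
    congr 1
    funext z
    simp [h]
  rw [analyticOrderAt_pow hA, analyticOrderAt_mul analyticAt_id (hB.pow 3),
    analyticOrderAt_pow hB, analyticOrderAt_id] at hord
  by_contra hB
  obtain ⟨n, hn⟩ := ENat.ne_top_iff_exists.mp hB
  rw [← hn] at hord
  simp only [nsmul_eq_mul] at hord
  cases ha : analyticOrderAt A 0 using ENat.recTopCoe with
  | top =>
    rw [ha, ENat.mul_top (by norm_num)] at hord
    exact ENat.top_ne_natCast (1 + 3 * n) (by exact_mod_cast hord)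
  | coe m =>
    rw [ha] at hord
    norm_cast at hord
    omega

variable [CharZero 𝕜] [CompleteSpace 𝕜]

theorem tendsto_div_pow_of_iteratedDeriv_eq_zero {ξ : 𝕜 → 𝕜} (hξ : AnalyticAt 𝕜 ξ 0) {b : ℕ}
    (hb : ∀ k < b, iteratedDeriv k ξ 0 = 0) :
    Tendsto (fun t => ξ t / t ^ b) (𝓝[≠] 0) (𝓝 (iteratedDeriv b ξ 0 / b !)) := by
  obtain ⟨G, hG, hξG⟩ := hξ.exists_eq_sum_add_pow_mul (b + 1)
  have hlim : Tendsto (fun t => iteratedDeriv b ξ 0 / b ! + t * G t) (𝓝 0)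
      (𝓝 (iteratedDeriv b ξ 0 / b !)) := by
    simpa using (show ContinuousAt (fun t => iteratedDeriv b ξ 0 / b ! + t * G t) 0 from
      continuousAt_const.add (continuousAt_id.mul hG.continuousAt)).tendsto
  refine (hlim.mono_left nhdsWithin_le_nhds).congr' ?_
  filter_upwards [self_mem_nhdsWithin] with t (ht : t ≠ 0)
  rw [hξG t, Finset.sum_range_succ,
    Finset.sum_eq_zero fun i hi => by simp [hb i (Finset.mem_range.mp hi)]]
  simp only [smul_eq_mul]
  field_simp
  ring

theorem iteratedDeriv_eq_mul_of_eq_mul {F ξ γ : 𝕜 → 𝕜} (hF : ContinuousAt F 0)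
    (hξ : AnalyticAt 𝕜 ξ 0) (hγ : AnalyticAt 𝕜 γ 0) (hγξ : ∀ t, γ t = F t * ξ t) {b : ℕ}
    (hb : ∀ k < b, iteratedDeriv k ξ 0 = 0) :
    ∀ k ≤ b, iteratedDeriv k γ 0 = F 0 * iteratedDeriv k ξ 0 := by
  intro k
  induction k using Nat.strong_induction_on with
  | _ k ih =>
    intro hk
    have hγk : ∀ j < k, iteratedDeriv j γ 0 = 0 := fun j hj => by
      rw [ih j hj (by omega), hb j (by omega), mul_zero]
    have hFξ := (hF.tendsto.mono_left nhdsWithin_le_nhds).mul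
      (tendsto_div_pow_of_iteratedDeriv_eq_zero (b := k) hξ fun j hj => hb j (by omega))
    have := tendsto_nhds_unique (tendsto_div_pow_of_iteratedDeriv_eq_zero hγ hγk)
      (hFξ.congr fun t => by rw [hγξ, mul_div_assoc])
    rwa [← mul_div_assoc, div_left_inj' (by exact_mod_cast k.factorial_ne_zero)] at this

theorem eq_zero_of_forall_iteratedDeriv_eq_zero [PreconnectedSpace 𝕜] {ξ : 𝕜 → 𝕜}
    (hξ : AnalyticOnNhd 𝕜 ξ univ) (h : ∀ k, iteratedDeriv k ξ 0 = 0) : ξ = 0 :=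
  (AnalyticOnNhd.analyticOrderAt_eq_top_iff_eq_zero 0 fun t => hξ t trivial).mp <|
    ENat.eq_top_iff_forall_ge.mpr fun _ =>
      (natCast_le_analyticOrderAt_iff_iteratedDeriv_eq_zero (hξ 0 trivial)).mpr fun k _ => h k

end OneVariable

noncomputable def iteratedPartialDerivFst : ℕ → ((ℝ × ℝ) → ℝ) → (ℝ × ℝ) → ℝ
  | 0, Φ => Φ
  | k + 1, Φ => fun p => fderiv ℝ (iteratedPartialDerivFst k Φ) p (1, 0)

theorem analyticOnNhd_iteratedPartialDerivFst {Φ : ℝ × ℝ → ℝ} (hΦ : AnalyticOnNhd ℝ Φ univ)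
    (k : ℕ) : AnalyticOnNhd ℝ (iteratedPartialDerivFst k Φ) univ := by
  induction k with
  | zero => exact hΦ
  | succ k ih =>
    exact fun p hp => ((ContinuousLinearMap.apply ℝ ℝ ((1 : ℝ), (0 : ℝ))).analyticAt _).comp
      (ih.fderiv p hp)

theorem iteratedDeriv_apply_mk_eq_iteratedPartialDerivFst {Φ : ℝ × ℝ → ℝ}
    (hΦ : AnalyticOnNhd ℝ Φ univ) (k : ℕ) (z : ℝ) :
    iteratedDeriv k (fun t => Φ (t, z)) = fun t => iteratedPartialDerivFst k Φ (t, z) := by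
  induction k with
  | zero => rfl
  | succ k ih =>
    rw [iteratedDeriv_succ, ih]
    funext t
    have hline : HasDerivAt (fun s : ℝ => (s, z)) ((1 : ℝ), (0 : ℝ)) t :=
      (hasDerivAt_id t).prodMk (hasDerivAt_const t z)
    exact ((analyticOnNhd_iteratedPartialDerivFst hΦ k (t, z) trivial).differentiableAt
      |>.hasFDerivAt.comp_hasDerivAt t hline).deriv

theorem not_forall_pow_three_eq_of_mul_eq {F Φg Φh : ℝ × ℝ → ℝ} (hF : Continuous F)
    (hg : AnalyticOnNhd ℝ Φg univ) (hh : AnalyticOnNhd ℝ Φh univ)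
    (hFh : ∀ p, F p * Φh p = Φg p) (hΦh : Φh ≠ 0) : ¬ ∀ z, F (0, z) ^ 3 = z := by
  intro hcube
  have hslice : ∀ {Φ : ℝ × ℝ → ℝ}, AnalyticOnNhd ℝ Φ univ → ∀ z,
      AnalyticOnNhd ℝ (fun t => Φ (t, z)) univ := fun hΦ z t _ =>
    (hΦ (t, z) trivial).comp (f := fun s => (s, z)) (analyticAt_id.prod analyticAt_const)
  have hcoeff : ∀ {Φ : ℝ × ℝ → ℝ}, AnalyticOnNhd ℝ Φ univ → ∀ k,
      AnalyticOnNhd ℝ (fun z => iteratedPartialDerivFst k Φ (0, z)) univ := fun hΦ k z _ =>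
    (analyticOnNhd_iteratedPartialDerivFst hΦ k (0, z) trivial).comp
      (analyticAt_const.prod analyticAt_id)
  have hex : ∃ k z, iteratedPartialDerivFst k Φh (0, z) ≠ 0 := by
    by_contra! hzero
    obtain ⟨⟨t, z⟩, hp⟩ := Function.ne_iff.mp hΦh
    refine hp (congrFun (eq_zero_of_forall_iteratedDeriv_eq_zero (hslice hh z) fun k => ?_) t)
    rw [iteratedDeriv_apply_mk_eq_iteratedPartialDerivFst hh]
    exact hzero k z
  classical
  set b := Nat.find hex
  set A := fun z => iteratedPartialDerivFst b Φg (0, z)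
  set B := fun z => iteratedPartialDerivFst b Φh (0, z)
  have hAB : ∀ z, A z = F (0, z) * B z := fun z => by
    have := iteratedDeriv_eq_mul_of_eq_mul (F := fun t => F (t, z))
      (hF.comp (by fun_prop)).continuousAt (hslice hh z 0 trivial) (hslice hg z 0 trivial)
      (fun t => (hFh (t, z)).symm) (b := b) (fun k hk => ?_) b le_rfl
    · simpa [iteratedDeriv_apply_mk_eq_iteratedPartialDerivFst, hg, hh] using this
    · rw [iteratedDeriv_apply_mk_eq_iteratedPartialDerivFst hh]
      by_contra hne
      exact Nat.find_min hex hk ⟨z, hne⟩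
  have hB : analyticOrderAt B 0 ≠ ⊤ := by
    obtain ⟨z, hz⟩ := Nat.find_spec hex
    rw [ne_eq, AnalyticOnNhd.analyticOrderAt_eq_top_iff_eq_zero 0 fun z => hcoeff hh b z trivial]
    exact fun h0 => hz (congrFun h0 z)
  exact hB <| analyticOrderAt_eq_top_of_pow_three_eq (hcoeff hg b 0 trivial)
    (hcoeff hh b 0 trivial) fun z => (congrArg (· ^ 3) (hAB z)).trans (by rw [mul_pow, hcube])

theorem mul_eq_of_eq_div_of_isNowhereDense {X : Type*} [TopologicalSpace X] {f g h : X → ℝ}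
    (hf : Continuous f) (hg : Continuous g) (hh : Continuous h)
    (hZ : IsNowhereDense {x | h x = 0}) (hfgh : ∀ x, h x ≠ 0 → f x = g x / h x) (x : X) :
    f x * h x = g x := by
  have hdense : Dense {x | h x = 0}ᶜ := interior_eq_empty_iff_dense_compl.mp <|
    (isClosed_eq hh continuous_const).isNowhereDense_iff.mp hZ
  refine congrFun ((hf.mul hh).ext_on hdense hg fun y (hy : h y ≠ 0) => ?_) x
  simp [hfgh y hy, div_mul_cancel₀ _ hy]

theorem pow_three_apply_axis {ψ₁ ψ₂ : (Fin 3 → ℝ) → ℝ} (hψ₁ : Continuous ψ₁)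
    (H : ∀ x y z : ℝ,
      x ^ 3 * y * ψ₁ ![x, y, z] + (x ^ 3 - y ^ 3 * z) * ψ₂ ![x, y, z] = x ^ 4) (z : ℝ) :
    ψ₁ ![0, 0, z] ^ 3 = z := by
  obtain ⟨s, rfl⟩ := surjective_pow_of_odd (by decide : Odd 3) z
  suffices hsurf : ∀ p : ℝ × ℝ, ψ₁ ![p.1 * p.2, p.2, p.1 ^ 3] = p.1 by
    simpa using congrArg (· ^ 3) (hsurf (s, 0))
  refine congrFun ((hψ₁.comp (by fun_prop)).ext_on
    ((dense_compl_singleton 0).prod (dense_compl_singleton 0)) continuous_fst ?_)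
  rintro ⟨s, y⟩ ⟨hs : s ≠ 0, hy : y ≠ 0⟩
  have hsy := H (s * y) y (s ^ 3)
  refine mul_left_cancel₀ (mul_ne_zero (pow_ne_zero 3 hs) (pow_ne_zero 4 hy)) ?_
  simp only [Function.comp_apply]
  linear_combination hsy

/-- There do not exist Nash regulous functions `ψ₁, ψ₂ : ℝ³ → ℝ` satisfying
`x³·y·ψ₁(x,y,z) + (x³ − y³·z)·ψ₂(x,y,z) = x⁴` for all `(x,y,z) ∈ ℝ³`. -/
theorem no_nashRegulous_solution :
    ¬ ∃ ψ₁ ψ₂ : (Fin 3 → ℝ) → ℝ, IsNashRegulous ψ₁ ∧ IsNashRegulous ψ₂ ∧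
      ∀ x y z : ℝ,
        x ^ 3 * y * ψ₁ ![x, y, z] + (x ^ 3 - y ^ 3 * z) * ψ₂ ![x, y, z] = x ^ 4 := by
  rintro ⟨ψ₁, ψ₂, ⟨hψ₁, g, h, ⟨hg, -⟩, ⟨hh, -⟩, hZ, hdiv⟩, -, H⟩
  obtain ⟨x₀, hx₀⟩ : ∃ x₀, h x₀ ≠ 0 := by
    by_contra! h0
    simp [h0, IsNowhereDense] at hZ
  let L : ℝ × ℝ → (Fin 3 → ℝ) := fun p => p.1 • x₀ + p.2 • ![0, 0, 1]
  have hL : ∀ p, AnalyticAt ℝ L p := fun p =>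
    (analyticAt_fst.smul analyticAt_const).add (analyticAt_snd.smul analyticAt_const)
  have hhL : h ∘ L ≠ 0 := fun h0 => hx₀ <| by
    simpa only [L, Function.comp_apply, one_smul, zero_smul, add_zero, Pi.zero_apply]
      using congrFun h0 (1, 0)
  refine not_forall_pow_three_eq_of_mul_eq (hψ₁.comp (by fun_prop))
    (fun p _ => (hg (L p) trivial).comp (hL p)) (fun p _ => (hh (L p) trivial).comp (hL p))
    (fun p => mul_eq_of_eq_div_of_isNowhereDense hψ₁ hg.continuous hh.continuous hZ hdiv (L p))
    hhL fun z => ?_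
  simpa [L] using pow_three_apply_axis hψ₁ H z
end

section
/- The function f : ℝ² → ℝ given by f(z,w) = √(z⁴ + w⁴) is arc-analytic: for every function γ : ℝ → ℝ² that is real-analytic on the interval (−1,1), the composite t ↦ √(γ₁(t)⁴ + γ₂(t)⁴) is real-analytic on (−1,1). -/
/-!
At a point `t₀`, two real-analytic functions have a common analytic factor: `g₁ = p * a` and
`g₂ = p * b` near `t₀`, with `a t₀` and `b t₀` not both zero (take `p = (t - t₀) ^ n` for the smaller
of the two vanishing orders `n`). Then `√(g₁⁴ + g₂⁴) = p² √(a⁴ + b⁴)`, and the radicand `a⁴ + b⁴`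
is positive at `t₀`, where the square root is analytic.
-/

open Filter Topology

theorem AnalyticAt.exists_eventuallyEq_mul_mul {𝕜 : Type*} [NontriviallyNormedField 𝕜]
    {f g : 𝕜 → 𝕜} {z₀ : 𝕜} (hf : AnalyticAt 𝕜 f z₀) (hg : AnalyticAt 𝕜 g z₀) :
    ∃ p a b : 𝕜 → 𝕜, AnalyticAt 𝕜 p z₀ ∧ AnalyticAt 𝕜 a z₀ ∧ AnalyticAt 𝕜 b z₀ ∧
      (a z₀ ≠ 0 ∨ b z₀ ≠ 0) ∧ f =ᶠ[𝓝 z₀] p * a ∧ g =ᶠ[𝓝 z₀] p * b := by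
  wlog hfg : analyticOrderAt f z₀ ≤ analyticOrderAt g z₀ generalizing f g
  · obtain ⟨p, a, b, hp, ha, hb, hab, hgp, hfp⟩ := this hg hf (le_of_not_ge hfg)
    exact ⟨p, b, a, hp, hb, ha, hab.symm, hfp, hgp⟩
  induction h : analyticOrderAt f z₀ using ENat.recTopCoe with
  | top =>
    have hf0 := analyticOrderAt_eq_top.mp h
    have hg0 := analyticOrderAt_eq_top.mp (top_le_iff.mp (h ▸ hfg))
    refine ⟨0, 1, 1, analyticAt_const, analyticAt_const, analyticAt_const, by simp, ?_, ?_⟩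
    · filter_upwards [hf0] with z hz using by simp [hz]
    · filter_upwards [hg0] with z hz using by simp [hz]
  | coe n =>
    obtain ⟨u, hu, hu0, hfu⟩ := hf.analyticOrderAt_eq_natCast.mp h
    obtain ⟨w, hw, hgw⟩ := (natCast_le_analyticOrderAt hg).mp (h ▸ hfg)
    exact ⟨fun z ↦ (z - z₀) ^ n, u, w, by fun_prop, hu, hw, .inl hu0, hfu, hgw⟩

theorem Real.analyticAt_sqrt {x : ℝ} (hx : x ≠ 0) : AnalyticAt ℝ Real.sqrt x :=
  (Real.contDiffAt_sqrt hx).analyticAt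

theorem Real.sqrt_mul_pow_four_add_mul_pow_four (x a b : ℝ) :
    √((x * a) ^ 4 + (x * b) ^ 4) = x ^ 2 * √(a ^ 4 + b ^ 4) := by
  rw [show (x * a) ^ 4 + (x * b) ^ 4 = (x ^ 2) ^ 2 * (a ^ 4 + b ^ 4) by ring,
    Real.sqrt_mul (by positivity), Real.sqrt_sq (by positivity)]

theorem AnalyticAt.sqrt_pow_four_add_pow_four {g₁ g₂ : ℝ → ℝ} {t₀ : ℝ}
    (h₁ : AnalyticAt ℝ g₁ t₀) (h₂ : AnalyticAt ℝ g₂ t₀) :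
    AnalyticAt ℝ (fun t ↦ √(g₁ t ^ 4 + g₂ t ^ 4)) t₀ := by
  obtain ⟨p, a, b, hp, ha, hb, hab, hg₁, hg₂⟩ := h₁.exists_eventuallyEq_mul_mul h₂
  have hpos : a t₀ ^ 4 + b t₀ ^ 4 ≠ 0 := by rcases hab with hab | hab <;> positivity
  have hfactored : AnalyticAt ℝ (fun t ↦ p t ^ 2 * √(a t ^ 4 + b t ^ 4)) t₀ :=
    (hp.pow 2).mul ((Real.analyticAt_sqrt hpos).comp_of_eq ((ha.pow 4).add (hb.pow 4)) rfl)
  refine hfactored.congr ?_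
  filter_upwards [hg₁, hg₂] with t ht₁ ht₂
  rw [ht₁, ht₂, Pi.mul_apply, Pi.mul_apply, Real.sqrt_mul_pow_four_add_mul_pow_four]

/-- The function `f : ℝ² → ℝ`, `f(z, w) = √(z⁴ + w⁴)`, is arc-analytic. -/
theorem arcAnalytic_sqrt_z4_add_w4 :
    ArcAnalytic (fun p : ℝ × ℝ => Real.sqrt (p.1 ^ 4 + p.2 ^ 4)) := by
  intro γ hγ t ht
  exact (analyticAt_fst.comp (hγ t ht)).sqrt_pow_four_add_pow_four
    (analyticAt_snd.comp (hγ t ht))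
end

section
/- Define φ₂ : ℝ⁴ → ℝ by φ₂(x,y,z,w) = x⁴ / (x² + y²·√(z⁴ + w⁴)) whenever x² + y²·√(z⁴ + w⁴) ≠ 0, and φ₂(x,y,z,w) = 0 otherwise. Then φ₂ is arc-analytic: for every function γ : ℝ → ℝ⁴ that is real-analytic on the interval (−1,1), the composite φ₂ ∘ γ is real-analytic on (−1,1). -/
open Filter Topology

section Order

variable {𝕜 E F : Type*} [NontriviallyNormedField 𝕜] [NormedAddCommGroup E] [NormedSpace 𝕜 E]
  [NormedAddCommGroup F] [NormedSpace 𝕜 F] {t₀ : 𝕜}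

theorem analyticOrderAt_le_of_eventually_norm_le {f : 𝕜 → E} {g : 𝕜 → F}
    (hf : AnalyticAt 𝕜 f t₀) (hg : AnalyticAt 𝕜 g t₀) (hfg : ∀ᶠ t in 𝓝 t₀, ‖f t‖ ≤ ‖g t‖) :
    analyticOrderAt g t₀ ≤ analyticOrderAt f t₀ := by
  cases hn : analyticOrderAt f t₀ with
  | top => exact le_top
  | coe n =>
    by_contra! hlt
    obtain ⟨f₁, hf₁, hf₁0, hf_eq⟩ := hf.analyticOrderAt_eq_natCast.mp hn
    obtain ⟨g₁, hg₁, hg_eq⟩ :=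
      (natCast_le_analyticOrderAt hg (n := n + 1)).mp (Order.add_one_le_of_lt hlt)
    have hbound : ∀ᶠ t in 𝓝[≠] t₀, ‖f₁ t‖ ≤ ‖t - t₀‖ * ‖g₁ t‖ := by
      filter_upwards [self_mem_nhdsWithin, nhdsWithin_le_nhds (hfg.and (hf_eq.and hg_eq))]
        with t ht ⟨hle, hft, hgt⟩
      have hpos : 0 < ‖t - t₀‖ ^ n := pow_pos (norm_pos_iff.mpr (sub_ne_zero.mpr ht)) n
      rw [hft, hgt, norm_smul, norm_smul, norm_pow, norm_pow, pow_succ, mul_assoc] at hle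
      exact le_of_mul_le_mul_left hle hpos
    have hlim : Tendsto (fun t => ‖t - t₀‖ * ‖g₁ t‖) (𝓝[≠] t₀) (𝓝 0) := by
      have : ContinuousAt (fun t => ‖t - t₀‖ * ‖g₁ t‖) t₀ := by fun_prop
      simpa using this.tendsto.mono_left nhdsWithin_le_nhds
    exact hf₁0 <| norm_le_zero_iff.mp <|
      le_of_tendsto_of_tendsto (hf₁.continuousAt.norm.tendsto.mono_left nhdsWithin_le_nhds)
        hlim hbound

theorem analyticAt_div_of_analyticOrderAt_lt {f d : 𝕜 → 𝕜} (hf : AnalyticAt 𝕜 f t₀)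
    (hd : AnalyticAt 𝕜 d t₀) (hlt : analyticOrderAt d t₀ < analyticOrderAt f t₀) :
    AnalyticAt 𝕜 (fun t => f t / d t) t₀ := by
  obtain ⟨N, hN⟩ := ENat.ne_top_iff_exists.mp (ne_top_of_lt hlt)
  obtain ⟨D, hD, hD0, hd_eq⟩ := hd.analyticOrderAt_eq_natCast.mp hN.symm
  obtain ⟨F, hF, hf_eq⟩ :=
    (natCast_le_analyticOrderAt hf (n := N + 1)).mp (Order.add_one_le_of_lt (hN ▸ hlt))
  have hquot : AnalyticAt 𝕜 (fun t => (t - t₀) * (F t / D t)) t₀ :=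
    (analyticAt_id.sub analyticAt_const).mul (hF.div hD hD0)
  refine hquot.congr ?_
  filter_upwards [hf_eq, hd_eq] with t hft hdt
  rw [hft, hdt, smul_eq_mul, smul_eq_mul]
  rcases eq_or_ne (t - t₀) 0 with h0 | h0
  · simp [h0]
  · rw [pow_succ', mul_assoc, mul_div_assoc, mul_div_mul_left _ _ (pow_ne_zero N h0)]

end Order

theorem analyticAt_sqrt_add_pow_four_of_le {u v : ℝ → ℝ} {t₀ : ℝ} (hu : AnalyticAt ℝ u t₀)
    (hv : AnalyticAt ℝ v t₀) (hle : analyticOrderAt u t₀ ≤ analyticOrderAt v t₀) :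
    AnalyticAt ℝ (fun t => √(u t ^ 4 + v t ^ 4)) t₀ := by
  cases ha : analyticOrderAt u t₀ with
  | top =>
    rw [ha, top_le_iff] at hle
    refine (analyticAt_const (v := (0 : ℝ))).congr ?_
    filter_upwards [analyticOrderAt_eq_top.mp ha, analyticOrderAt_eq_top.mp hle] with t hut hvt
    simp [hut, hvt]
  | coe a =>
    obtain ⟨u₁, hu₁, hu₁0, hu_eq⟩ := hu.analyticOrderAt_eq_natCast.mp ha
    obtain ⟨v₁, hv₁, hv_eq⟩ := (natCast_le_analyticOrderAt hv).mp (ha ▸ hle)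
    have hQ0 : u₁ t₀ ^ 4 + v₁ t₀ ^ 4 ≠ 0 := by positivity
    have hQ : AnalyticAt ℝ (fun t => u₁ t ^ 4 + v₁ t ^ 4) t₀ := (hu₁.pow 4).add (hv₁.pow 4)
    have hsqrtQ : AnalyticAt ℝ (fun t => √(u₁ t ^ 4 + v₁ t ^ 4)) t₀ :=
      (Real.contDiffAt_sqrt hQ0).analyticAt.comp (f := fun t => u₁ t ^ 4 + v₁ t ^ 4) hQ
    have hroot : AnalyticAt ℝ (fun t => ((t - t₀) ^ a) ^ 2 * √(u₁ t ^ 4 + v₁ t ^ 4)) t₀ := by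
      fun_prop
    refine hroot.congr ?_
    filter_upwards [hu_eq, hv_eq] with t hut hvt
    have hfactor : u t ^ 4 + v t ^ 4 = (((t - t₀) ^ a) ^ 2) ^ 2 * (u₁ t ^ 4 + v₁ t ^ 4) := by
      rw [hut, hvt, smul_eq_mul, smul_eq_mul]; ring
    rw [hfactor, Real.sqrt_mul (by positivity), Real.sqrt_sq (by positivity)]

theorem analyticAt_sqrt_add_pow_four {u v : ℝ → ℝ} {t₀ : ℝ} (hu : AnalyticAt ℝ u t₀)
    (hv : AnalyticAt ℝ v t₀) : AnalyticAt ℝ (fun t => √(u t ^ 4 + v t ^ 4)) t₀ := by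
  rcases le_total (analyticOrderAt u t₀) (analyticOrderAt v t₀) with hle | hle
  · exact analyticAt_sqrt_add_pow_four_of_le hu hv hle
  · simpa only [add_comm] using analyticAt_sqrt_add_pow_four_of_le hv hu hle

theorem analyticAt_pow_four_div_sq_add_sq_mul {x y r : ℝ → ℝ} {t₀ : ℝ} (hx : AnalyticAt ℝ x t₀)
    (hy : AnalyticAt ℝ y t₀) (hr : AnalyticAt ℝ r t₀) (hr0 : ∀ᶠ t in 𝓝 t₀, 0 ≤ r t) :
    AnalyticAt ℝ (fun t => x t ^ 4 / (x t ^ 2 + y t ^ 2 * r t)) t₀ := by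
  set d : ℝ → ℝ := fun t => x t ^ 2 + y t ^ 2 * r t
  have hd : AnalyticAt ℝ d t₀ := (hx.pow 2).add ((hy.pow 2).mul hr)
  have hxd : ∀ᶠ t in 𝓝 t₀, x t ^ 2 ≤ d t := by
    filter_upwards [hr0] with t ht
    exact le_add_of_nonneg_right (by positivity)
  rcases ne_or_eq (d t₀) 0 with hdt₀ | hdt₀
  · exact (hx.pow 4).div hd hdt₀
  cases ha : analyticOrderAt x t₀ with
  | top =>
    refine (analyticAt_const (v := (0 : ℝ))).congr ?_
    filter_upwards [analyticOrderAt_eq_top.mp ha] with t ht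
    simp [ht]
  | coe a =>
    have hxt₀ : x t₀ = 0 :=
      pow_eq_zero_iff two_ne_zero |>.mp (le_antisymm (hdt₀ ▸ hxd.self_of_nhds) (sq_nonneg _))
    have ha0 : a ≠ 0 := by
      rintro rfl
      exact hx.analyticOrderAt_eq_zero.mp ha hxt₀
    have hord_pow (n : ℕ) : analyticOrderAt (x ^ n) t₀ = n * a := by
      simp [analyticOrderAt_pow hx, ha]
    have hnorm : ∀ᶠ t in 𝓝 t₀, ‖(x ^ 2) t‖ ≤ ‖d t‖ := hxd.mono fun t ht => by
      rwa [Pi.pow_apply, Real.norm_of_nonneg (sq_nonneg _),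
        Real.norm_of_nonneg ((sq_nonneg _).trans ht)]
    have hord_d : analyticOrderAt d t₀ ≤ 2 * a := by
      simpa [hord_pow] using analyticOrderAt_le_of_eventually_norm_le (hx.pow 2) hd hnorm
    refine analyticAt_div_of_analyticOrderAt_lt (f := x ^ 4) (hx.pow 4) hd ?_
    rw [hord_pow]
    exact hord_d.trans_lt (by exact_mod_cast (by omega : 2 * a < 4 * a))

/-- The function `φ₂(x,y,z,w) = x⁴ / (x² + y²·√(z⁴ + w⁴))` (extended by `0` where the
denominator vanishes) is arc-analytic on `ℝ⁴`. -/
theorem arcAnalytic_phi2_dim4 (φ₂ : ℝ × ℝ × ℝ × ℝ → ℝ)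
    (hφ₂ : ∀ p : ℝ × ℝ × ℝ × ℝ,
      φ₂ p = if p.1 ^ 2 + p.2.1 ^ 2 * Real.sqrt (p.2.2.1 ^ 4 + p.2.2.2 ^ 4) ≠ 0 then
          p.1 ^ 4 / (p.1 ^ 2 + p.2.1 ^ 2 * Real.sqrt (p.2.2.1 ^ 4 + p.2.2.2 ^ 4))
        else 0) :
    ArcAnalytic φ₂ := by
  intro γ hγ t₀ ht₀
  have hx : AnalyticAt ℝ (fun t => (γ t).1) t₀ := analyticAt_fst.comp (hγ t₀ ht₀)
  have hyzw : AnalyticAt ℝ (fun t => (γ t).2) t₀ := analyticAt_snd.comp (hγ t₀ ht₀)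
  have hzw : AnalyticAt ℝ (fun t => (γ t).2.2) t₀ := analyticAt_snd.comp hyzw
  have hφ₂γ : φ₂ ∘ γ = fun t => (γ t).1 ^ 4 /
      ((γ t).1 ^ 2 + (γ t).2.1 ^ 2 * √((γ t).2.2.1 ^ 4 + (γ t).2.2.2 ^ 4)) := by
    funext t
    -- the case split in `φ₂` is redundant, since `x / 0 = 0`
    rw [Function.comp_apply, hφ₂, ite_eq_left_iff, not_not]
    intro h
    rw [h, div_zero]
  rw [hφ₂γ]
  exact analyticAt_pow_four_div_sq_add_sq_mul hx (analyticAt_fst.comp hyzw)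
    (analyticAt_sqrt_add_pow_four (analyticAt_fst.comp hzw) (analyticAt_snd.comp hzw))
    (.of_forall fun _ => Real.sqrt_nonneg _)
end

section
/- Define φ₁ : ℝ⁴ → ℝ by φ₁(x,y,z,w) = √(z⁴ + w⁴), and φ₂ : ℝ⁴ → ℝ by φ₂(x,y,z,w) = x⁴ / (x² + y²·√(z⁴ + w⁴)) whenever x² + y²·√(z⁴ + w⁴) ≠ 0 and φ₂(x,y,z,w) = 0 otherwise. Then φ₁ and φ₂ are continuous on ℝ⁴ and satisfy x⁴·y²·φ₁(x,y,z,w) + (x⁴ − y⁴·(z⁴ + w⁴))·φ₂(x,y,z,w) = x⁶ for all (x,y,z,w) ∈ ℝ⁴. -/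
/-!
Write `b = y² √(z⁴ + w⁴) ≥ 0`, so that `φ₂ = x⁴ / (x² + b)` and `y⁴ (z⁴ + w⁴) = b²`. The identity
follows from `x⁴ - b² = (x² - b)(x² + b)`. Where the denominator vanishes we have `x = 0`, and
`0 ≤ x⁴ / (x² + b) ≤ x²` gives continuity there.
-/

theorem ite_ne_zero_div_else_zero {G₀ : Type*} [GroupWithZero G₀] [DecidableEq G₀] (a d : G₀) :
    (if d ≠ 0 then a / d else 0) = a / d := by
  split_ifs with hd
  · rfl
  · rw [not_not.mp hd, div_zero]

theorem pow_four_div_sq_add_le_sq {x b : ℝ} (hb : 0 ≤ b) : x ^ 4 / (x ^ 2 + b) ≤ x ^ 2 :=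
  div_le_of_le_mul₀ (by positivity) (sq_nonneg x) (by nlinarith [sq_nonneg x])

theorem Continuous.pow_four_div_sq_add {X : Type*} [TopologicalSpace X] {f g : X → ℝ}
    (hf : Continuous f) (hg : Continuous g) (hg₀ : ∀ p, 0 ≤ g p) :
    Continuous fun p ↦ f p ^ 4 / (f p ^ 2 + g p) := by
  refine continuous_iff_continuousAt.mpr fun p ↦ ?_
  by_cases hp : f p ^ 2 + g p = 0
  · have hfp : f p = 0 := pow_eq_zero_iff two_ne_zero |>.mp <| by linarith [sq_nonneg (f p), hg₀ p]
    have hsq : Filter.Tendsto (fun q ↦ f q ^ 2) (nhds p) (nhds 0) :=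
      (hf.pow 2).tendsto' p 0 (by simp [hfp])
    simpa [ContinuousAt, hfp] using
      squeeze_zero (fun q ↦ div_nonneg (by positivity) (add_nonneg (sq_nonneg _) (hg₀ q)))
        (fun q ↦ pow_four_div_sq_add_le_sq (hg₀ q)) hsq
  · exact ((hf.pow 4).continuousAt).div ((hf.pow 2).add hg).continuousAt hp

theorem pow_four_mul_add_sub_sq_mul_pow_four_div_sq_add {x b : ℝ} (hb : 0 ≤ b) :
    x ^ 4 * b + (x ^ 4 - b ^ 2) * (x ^ 4 / (x ^ 2 + b)) = x ^ 6 := by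
  by_cases hx : x = 0
  · simp [hx]
  · have hd : x ^ 2 + b ≠ 0 := by positivity
    field_simp
    ring

/-- With `φ₁(x,y,z,w) = √(z⁴ + w⁴)` and `φ₂(x,y,z,w) = x⁴ / (x² + y²·√(z⁴ + w⁴))`
(extended by `0` where the denominator vanishes), both `φ₁` and `φ₂` are continuous on `ℝ⁴`
and satisfy `x⁴·y²·φ₁ + (x⁴ − y⁴·(z⁴ + w⁴))·φ₂ = x⁶` everywhere. -/
theorem continuous_solution_of_equation_dim4 (φ₁ φ₂ : ℝ × ℝ × ℝ × ℝ → ℝ)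
    (hφ₁ : ∀ p : ℝ × ℝ × ℝ × ℝ, φ₁ p = Real.sqrt (p.2.2.1 ^ 4 + p.2.2.2 ^ 4))
    (hφ₂ : ∀ p : ℝ × ℝ × ℝ × ℝ,
      φ₂ p = if p.1 ^ 2 + p.2.1 ^ 2 * Real.sqrt (p.2.2.1 ^ 4 + p.2.2.2 ^ 4) ≠ 0 then
          p.1 ^ 4 / (p.1 ^ 2 + p.2.1 ^ 2 * Real.sqrt (p.2.2.1 ^ 4 + p.2.2.2 ^ 4))
        else 0) :
    Continuous φ₁ ∧ Continuous φ₂ ∧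
      ∀ x y z w : ℝ,
        x ^ 4 * y ^ 2 * φ₁ (x, y, z, w) +
          (x ^ 4 - y ^ 4 * (z ^ 4 + w ^ 4)) * φ₂ (x, y, z, w) = x ^ 6 := by
  obtain rfl : φ₁ = fun p ↦ √(p.2.2.1 ^ 4 + p.2.2.2 ^ 4) := funext hφ₁
  obtain rfl : φ₂ = fun p ↦ p.1 ^ 4 / (p.1 ^ 2 + p.2.1 ^ 2 * √(p.2.2.1 ^ 4 + p.2.2.2 ^ 4)) :=
    funext fun p ↦ (hφ₂ p).trans (ite_ne_zero_div_else_zero _ _)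
  refine ⟨by fun_prop, continuous_fst.pow_four_div_sq_add (by fun_prop)
    fun p ↦ by positivity, fun x y z w ↦ ?_⟩
  have hsq : y ^ 4 * (z ^ 4 + w ^ 4) = (y ^ 2 * √(z ^ 4 + w ^ 4)) ^ 2 := by
    rw [mul_pow, Real.sq_sqrt (by positivity), ← pow_mul]
  rw [hsq, mul_assoc]
  exact pow_four_mul_add_sub_sq_mul_pow_four_div_sq_add (by positivity)
end

section
/- Let ψ₁, ψ₂ : ℝ⁴ → ℝ be continuous functions satisfying x⁴·y²·ψ₁(x,y,z,w) + (x⁴ − y⁴·(z⁴ + w⁴))·ψ₂(x,y,z,w) = x⁶ for all (x,y,z,w) ∈ ℝ⁴. Then ψ₁(0,0,c,d) = √(c⁴ + d⁴) for all real numbers c, d. -/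
/-!
On the surface `x⁴ = y⁴ (z⁴ + w⁴)` the `ψ₂` term drops out, so along the line
`t ↦ (t s, t, c, d)` with `s⁴ = c⁴ + d⁴` and `s ≠ 0` the identity forces `ψ₁ = s² = √(c⁴ + d⁴)`
for `t ≠ 0`, hence also at `t = 0` by continuity. The points with `c = d = 0` are then covered by
continuity in `(c, d)`.
-/

theorem pow_four_sqrt_sqrt {a : ℝ} (ha : 0 ≤ a) : √√a ^ 4 = a := by
  rw [show 4 = 2 * 2 from rfl, pow_mul, Real.sq_sqrt (Real.sqrt_nonneg a), Real.sq_sqrt ha]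

theorem add_pow_four_pos_of_ne_zero {p : ℝ × ℝ} (hp : p ≠ 0) : 0 < p.1 ^ 4 + p.2 ^ 4 := by
  rcases p with ⟨c, d⟩
  have hcd : c ≠ 0 ∨ d ≠ 0 := by simpa [Prod.ext_iff, or_iff_not_imp_left] using hp
  rcases hcd with hc | hd
  · exact add_pos_of_pos_of_nonneg (by positivity) (by positivity)
  · exact add_pos_of_nonneg_of_pos (by positivity) (by positivity)

section

variable {ψ₁ ψ₂ : ℝ × ℝ × ℝ × ℝ → ℝ}
  (heq : ∀ x y z w : ℝ,
    x ^ 4 * y ^ 2 * ψ₁ (x, y, z, w) + (x ^ 4 - y ^ 4 * (z ^ 4 + w ^ 4)) * ψ₂ (x, y, z, w) = x ^ 6)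
include heq

theorem apply_mul_eq_sq_of_pow_four_eq {c d s t : ℝ} (hs : s ^ 4 = c ^ 4 + d ^ 4) (hs₀ : s ≠ 0)
    (ht : t ≠ 0) : ψ₁ (t * s, t, c, d) = s ^ 2 := by
  have h : (s ^ 4 * t ^ 6) * ψ₁ (t * s, t, c, d) = (s ^ 4 * t ^ 6) * s ^ 2 := by
    linear_combination heq (t * s) t c d - t ^ 4 * ψ₂ (t * s, t, c, d) * hs
  exact mul_left_cancel₀ (by positivity) h

theorem apply_zero_zero_eq_sqrt_of_pos (hψ₁ : Continuous ψ₁) {c d : ℝ}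
    (hpos : 0 < c ^ 4 + d ^ 4) : ψ₁ (0, 0, c, d) = √(c ^ 4 + d ^ 4) := by
  set s := √√(c ^ 4 + d ^ 4)
  have hs₀ : s ≠ 0 := (Real.sqrt_pos.2 (Real.sqrt_pos.2 hpos)).ne'
  have hline : Continuous fun t : ℝ ↦ ψ₁ (t * s, t, c, d) := by fun_prop
  have h := hline.ext_on (dense_compl_singleton 0) continuous_const fun t ht ↦
    apply_mul_eq_sq_of_pow_four_eq heq (pow_four_sqrt_sqrt hpos.le) hs₀ ht
  simpa [s, Real.sq_sqrt (Real.sqrt_nonneg _)] using congrFun h 0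

end

theorem continuous_solution_forces_sqrt_general (ψ₁ ψ₂ : ℝ × ℝ × ℝ × ℝ → ℝ)
    (hψ₁ : Continuous ψ₁)
    (heq : ∀ x y z w : ℝ,
      x ^ 4 * y ^ 2 * ψ₁ (x, y, z, w) +
        (x ^ 4 - y ^ 4 * (z ^ 4 + w ^ 4)) * ψ₂ (x, y, z, w) = x ^ 6) :
    ∀ c d : ℝ, ψ₁ (0, 0, c, d) = Real.sqrt (c ^ 4 + d ^ 4) := by
  intro c d
  have hf : Continuous fun p : ℝ × ℝ ↦ ψ₁ (0, 0, p.1, p.2) := by fun_prop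
  have hg : Continuous fun p : ℝ × ℝ ↦ √(p.1 ^ 4 + p.2 ^ 4) := by fun_prop
  have h := hf.ext_on (dense_compl_singleton 0) hg fun p hp ↦
    apply_zero_zero_eq_sqrt_of_pos heq hψ₁ (add_pow_four_pos_of_ne_zero hp)
  exact congrFun h (c, d)

/-- If `ψ₁, ψ₂ : ℝ⁴ → ℝ` are continuous and satisfy
`x⁴·y²·ψ₁(x,y,z,w) + (x⁴ − y⁴·(z⁴ + w⁴))·ψ₂(x,y,z,w) = x⁶` everywhere, then
`ψ₁(0,0,c,d) = √(c⁴ + d⁴)` for all real `c, d`. -/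
theorem continuous_solution_forces_sqrt (ψ₁ ψ₂ : ℝ × ℝ × ℝ × ℝ → ℝ)
    (hψ₁ : Continuous ψ₁) (hψ₂ : Continuous ψ₂)
    (heq : ∀ x y z w : ℝ,
      x ^ 4 * y ^ 2 * ψ₁ (x, y, z, w) +
        (x ^ 4 - y ^ 4 * (z ^ 4 + w ^ 4)) * ψ₂ (x, y, z, w) = x ^ 6) :
    ∀ c d : ℝ, ψ₁ (0, 0, c, d) = Real.sqrt (c ^ 4 + d ^ 4) :=
  continuous_solution_forces_sqrt_general ψ₁ ψ₂ hψ₁ heq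
end
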